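/- arXiv:1002.1414 — 3 statements merged into one kernel-verified Lean document; each statement's English description precedes it below -/
import Mathlib

section
/- Consequently, if (A;B;C;D) ∈ BS(n+1,n) and (C̃;D̃) is obtained from (C;D) by swapping every quad of type 4 = [[+,−],[−,+]] with type 5 = [[−,+],[+,−]] and vice versa, then (A;B;C̃;D̃) ∈ BS(n+1,n). -/
/-!
Write `α j = a j a (n+2-j) b j b (n+2-j)` and `β j = c j c (n+1-j) d j d (n+1-j)` for the products
of the quads of `(a;b)` and `(c;d)`. An autocorrelation at shift `L - k` is a sum of `k` terms `±1`,
so modulo 4 it is determined by `k` and the product of those terms. Hence the vanishing of the four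
autocorrelations at shift `n+1-k` forces `∏_{j≤k} α j * ∏_{j<k} β j = -1`. Comparing consecutive `k`
gives `α (t+1) = β t`; together with the reflection symmetry of `α` and `β` this makes `β` constant,
and a middle quad (of `(c;d)` or of `(a;b)`, depending on the parity of `n`) shows that `β = 1`.

Given `β = 1`, the swap fixes `c + d` and replaces `c - d` by its reversal. Since
`2 (N_c + N_d) = N_{c+d} + N_{c-d}` and autocorrelations are invariant under reversal, the sum
`N_c + N_d` is unchanged.
-/

open Finset

/-- Nonperiodic autocorrelation function of a sequence supported on `[1,n]`. -/
noncomputable def ac (n : ℕ) (a : ℤ → ℤ) (i : ℤ) : ℤ :=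
  ∑ j ∈ Finset.Icc (1 : ℤ) (n : ℤ), a j * a (i + j)

/-- `a` is a `±1`-sequence of length `m`, extended by zero. -/
def binOn (m : ℕ) (a : ℤ → ℤ) : Prop :=
  (∀ j : ℤ, 1 ≤ j → j ≤ (m : ℤ) → a j = 1 ∨ a j = -1) ∧
  (∀ j : ℤ, j < 1 ∨ (m : ℤ) < j → a j = 0)

/-- Base sequences `BS(n+1,n)`. -/
def isBS (n : ℕ) (a b c d : ℤ → ℤ) : Prop :=
  binOn (n + 1) a ∧ binOn (n + 1) b ∧ binOn n c ∧ binOn n d ∧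
  ∀ i : ℤ, i ≠ 0 →
    ac (n + 1) a i + ac (n + 1) b i + ac n c i + ac n d i = 0

open Classical in
/-- Swap quads of type 4 = [[+,−],[−,+]] and 5 = [[−,+],[+,−]] of the pair `(c;d)`:
negate the entries of `x` at the positions of every such quad. -/
noncomputable def tswap (n : ℕ) (c d x : ℤ → ℤ) : ℤ → ℤ := fun j =>
  if 1 ≤ j ∧ j ≤ (n : ℤ) ∧ d j = -c j ∧ d ((n : ℤ) + 1 - j) = -c ((n : ℤ) + 1 - j) ∧
      c ((n : ℤ) + 1 - j) = -c j
  then -x j else x j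

section ModFour

lemma add_modEq_one_add_mul {x y : ℤ} (hx : IsUnit x) (hy : IsUnit y) :
    x + y ≡ 1 + x * y [ZMOD 4] := by
  rcases Int.isUnit_iff.mp hx with rfl | rfl <;> rcases Int.isUnit_iff.mp hy with rfl | rfl <;>
    decide

lemma sum_modEq_card_sub_one_add_prod {ι : Type*} {s : Finset ι} {x : ι → ℤ}
    (hx : ∀ i ∈ s, IsUnit (x i)) : ∑ i ∈ s, x i ≡ #s - 1 + ∏ i ∈ s, x i [ZMOD 4] := by
  induction s using Finset.cons_induction with
  | empty => simp only [sum_empty, prod_empty, card_empty]; decide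
  | cons a s ha ih =>
    rw [sum_cons, prod_cons, card_cons]
    have hxa : IsUnit (x a) := hx a (mem_cons_self a s)
    have hxs : ∀ i ∈ s, IsUnit (x i) := fun i hi => hx i (mem_cons_of_mem hi)
    calc x a + ∑ i ∈ s, x i ≡ x a + (#s - 1 + ∏ i ∈ s, x i) [ZMOD 4] := (ih hxs).add_left _
      _ = (x a + ∏ i ∈ s, x i) + (#s - 1) := by ring
      _ ≡ (1 + x a * ∏ i ∈ s, x i) + (#s - 1) [ZMOD 4] :=
          (add_modEq_one_add_mul hxa (IsUnit.prod_iff.mpr hxs)).add_right _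
      _ = ↑(#s + 1) - 1 + x a * ∏ i ∈ s, x i := by push_cast; ring

lemma eq_neg_one_of_modEq {u : ℤ} (hu : IsUnit u) (h : u ≡ -1 [ZMOD 4]) : u = -1 := by
  rcases Int.isUnit_iff.mp hu with rfl | rfl
  · exact absurd h (by decide)
  · rfl

end ModFour

lemma binOn.isUnit {m : ℕ} {x : ℤ → ℤ} (hx : binOn m x) {j : ℤ} (h1 : 1 ≤ j) (h2 : j ≤ m) :
    IsUnit (x j) :=
  Int.isUnit_iff.mpr (hx.1 j h1 h2)

lemma prod_Icc_one_add_one {f : ℤ → ℤ} {k : ℤ} (hk : 0 ≤ k) :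
    ∏ j ∈ Icc 1 (k + 1), f j = (∏ j ∈ Icc 1 k, f j) * f (k + 1) := by
  rw [← insert_Icc_right_eq_Icc_add_one (by omega), prod_insert (by simp), mul_comm]

section Autocorrelation

variable {L : ℕ} {x : ℤ → ℤ}

lemma ac_eq_finsum (hx : ∀ j, j < 1 ∨ (L : ℤ) < j → x j = 0) (i : ℤ) :
    ac L x i = ∑ᶠ j, x j * x (i + j) := by
  rw [ac, finsum_eq_sum_of_support_subset]
  intro j hj
  by_contra hj'
  simp only [coe_Icc, Set.mem_Icc] at hj'
  exact hj (by simp only [hx j (by omega), zero_mul])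

lemma ac_neg (hx : ∀ j, j < 1 ∨ (L : ℤ) < j → x j = 0) (i : ℤ) : ac L x (-i) = ac L x i := by
  rw [ac_eq_finsum hx, ac_eq_finsum hx, ← finsum_comp_equiv (Equiv.addRight i)]
  refine finsum_congr fun j => ?_
  simp only [Equiv.coe_addRight]
  rw [show -i + (j + i) = j by ring, add_comm j i, mul_comm]

lemma ac_reflect (hx : ∀ j, j < 1 ∨ (L : ℤ) < j → x j = 0) (i : ℤ) :
    ac L (fun j => x (L + 1 - j)) i = ac L x i := by
  rw [← ac_neg hx, ac_eq_finsum hx, ac_eq_finsum (fun j hj => hx _ (by omega)),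
    ← finsum_comp_equiv (Equiv.subLeft ((L : ℤ) + 1))]
  refine finsum_congr fun j => ?_
  simp only [Equiv.subLeft_apply]
  ring_nf

lemma ac_add_add_ac_sub (x y : ℤ → ℤ) (i : ℤ) :
    ac L (x + y) i + ac L (x - y) i = 2 * (ac L x i + ac L y i) := by
  simp only [ac, Pi.add_apply, Pi.sub_apply, mul_sum, ← sum_add_distrib]
  exact sum_congr rfl fun j _ => by ring

lemma ac_sub_modEq (hx : binOn L x) {k : ℤ} (hk0 : 0 ≤ k) (hkL : k ≤ L) :
    ac L x (L - k) ≡ k - 1 + ∏ j ∈ Icc 1 k, x j * x (L + 1 - j) [ZMOD 4] := by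
  have htrunc : ac L x (L - k) = ∑ j ∈ Icc 1 k, x j * x (L - k + j) := by
    refine (sum_subset (Icc_subset_Icc_right hkL) fun j hj hjk => ?_).symm
    simp only [mem_Icc] at hj hjk
    rw [hx.2 (L - k + j) (by omega), mul_zero]
  have hreflect : ∏ j ∈ Icc 1 k, x (L - k + j) = ∏ j ∈ Icc 1 k, x (L + 1 - j) :=
    prod_nbij' (fun j => k + 1 - j) (fun j => k + 1 - j)
      (fun j hj => by simp only [mem_Icc] at hj ⊢; omega)
      (fun j hj => by simp only [mem_Icc] at hj ⊢; omega)
      (fun j _ => by ring) (fun j _ => by ring) (fun j _ => by ring_nf)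
  have hcard : (#(Icc 1 k) : ℤ) = k := by rw [Int.card_Icc]; omega
  have hunit : ∀ j ∈ Icc 1 k, IsUnit (x j * x (L - k + j)) := fun j hj => by
    simp only [mem_Icc] at hj
    exact (hx.isUnit hj.1 (by omega)).mul (hx.isUnit (by omega) (by omega))
  have := sum_modEq_card_sub_one_add_prod hunit
  rwa [hcard, prod_mul_distrib, hreflect, ← prod_mul_distrib, ← htrunc] at this

lemma binOn.isUnit_prod_mul_reflect (hx : binOn L x) {k : ℤ} (hkL : k ≤ L) :
    IsUnit (∏ j ∈ Icc 1 k, x j * x (L + 1 - j)) :=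
  IsUnit.prod_iff.mpr fun j hj => by
    simp only [mem_Icc] at hj
    exact (hx.isUnit hj.1 (by omega)).mul (hx.isUnit (by omega) (by omega))

end Autocorrelation

def quadProd (L : ℤ) (x y : ℤ → ℤ) (j : ℤ) : ℤ := x j * x (L + 1 - j) * (y j * y (L + 1 - j))

lemma quadProd_reflect (L : ℤ) (x y : ℤ → ℤ) (j : ℤ) :
    quadProd L x y (L + 1 - j) = quadProd L x y j := by
  simp only [quadProd, sub_sub_cancel]
  ring

lemma prod_quadProd (s : Finset ℤ) (L : ℤ) (x y : ℤ → ℤ) :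
    ∏ j ∈ s, quadProd L x y j =
      (∏ j ∈ s, x j * x (L + 1 - j)) * ∏ j ∈ s, y j * y (L + 1 - j) :=
  prod_mul_distrib

lemma quadProd_eq_one_of_two_mul_eq {L : ℤ} {x y : ℤ → ℤ} {j : ℤ} (hj : 2 * j = L + 1)
    (hx : IsUnit (x j)) (hy : IsUnit (y j)) : quadProd L x y j = 1 := by
  rw [quadProd, show L + 1 - j = j by omega, Int.isUnit_mul_self hx, Int.isUnit_mul_self hy,
    one_mul]

section Swap

variable {n : ℕ} {c d : ℤ → ℤ}

lemma binOn_tswap {x : ℤ → ℤ} (hx : binOn n x) : binOn n (tswap n c d x) := by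
  refine ⟨fun j h1 h2 => ?_, fun j hj => ?_⟩ <;> simp only [tswap] <;> split_ifs
  · rcases hx.1 j h1 h2 with h | h <;> simp [h]
  · exact hx.1 j h1 h2
  · simp [hx.2 j hj]
  · exact hx.2 j hj

lemma tswap_add_tswap : tswap n c d c + tswap n c d d = c + d := by
  funext j
  simp only [tswap, Pi.add_apply]
  split_ifs with hP
  · rw [hP.2.2.1]; ring
  · rfl

lemma tswap_sub_tswap (hc : binOn n c) (hd : binOn n d)
    (hquad : ∀ j : ℤ, 1 ≤ j → j ≤ n → quadProd n c d j = 1) :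
    tswap n c d c - tswap n c d d = fun j => (c - d) (n + 1 - j) := by
  funext j
  simp only [tswap, Pi.sub_apply]
  split_ifs with hP
  · obtain ⟨-, -, h1, h2, h3⟩ := hP
    linarith
  · by_cases hj : 1 ≤ j ∧ j ≤ n
    · have hq := hquad j hj.1 hj.2
      rcases hc.1 j hj.1 hj.2 with h1 | h1 <;>
        rcases hc.1 (n + 1 - j) (by omega) (by omega) with h2 | h2 <;>
        rcases hd.1 j hj.1 hj.2 with h3 | h3 <;>
        rcases hd.1 (n + 1 - j) (by omega) (by omega) with h4 | h4 <;>
        simp_all [quadProd]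
    · rw [hc.2 j (by omega), hd.2 j (by omega), hc.2 (n + 1 - j) (by omega),
        hd.2 (n + 1 - j) (by omega)]

end Swap

namespace isBS

variable {n : ℕ} {a b c d : ℤ → ℤ}

lemma prod_quadProd_mul_prod_quadProd (h : isBS n a b c d) {k : ℤ} (hk1 : 1 ≤ k) (hkn : k ≤ n) :
    (∏ j ∈ Icc 1 k, quadProd (n + 1) a b j) * ∏ j ∈ Icc 1 (k - 1), quadProd n c d j = -1 := by
  obtain ⟨ha, hb, hc, hd, hz⟩ := h
  have hA := ac_sub_modEq ha (k := k) (by omega) (by push_cast; omega)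
  have hB := ac_sub_modEq hb (k := k) (by omega) (by push_cast; omega)
  have hC := ac_sub_modEq hc (k := k - 1) (by omega) (by omega)
  have hD := ac_sub_modEq hd (k := k - 1) (by omega) (by omega)
  push_cast at hA hB
  rw [show (n : ℤ) - (k - 1) = n + 1 - k by ring] at hC hD
  have uA := ha.isUnit_prod_mul_reflect (k := k) (by push_cast; omega)
  have uB := hb.isUnit_prod_mul_reflect (k := k) (by push_cast; omega)
  have uC := hc.isUnit_prod_mul_reflect (k := k - 1) (by omega)
  have uD := hd.isUnit_prod_mul_reflect (k := k - 1) (by omega)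
  push_cast at uA uB
  have hAB := add_modEq_one_add_mul uA uB
  have hCD := add_modEq_one_add_mul uC uD
  have hABCD := add_modEq_one_add_mul (uA.mul uB) (uC.mul uD)
  have hsum := hz (n + 1 - k) (by omega)
  rw [prod_quadProd, prod_quadProd]
  refine eq_neg_one_of_modEq ((uA.mul uB).mul (uC.mul uD)) ?_
  unfold Int.ModEq at *
  omega

lemma quadProd_add_one_eq (h : isBS n a b c d) {t : ℤ} (ht1 : 1 ≤ t) (htn : t < n) :
    quadProd (n + 1) a b (t + 1) = quadProd n c d t := by
  obtain ⟨s, rfl⟩ : ∃ s, t = s + 1 := ⟨t - 1, by ring⟩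
  have h0 := h.prod_quadProd_mul_prod_quadProd (k := s + 1) (by omega) (by omega)
  have h1 := h.prod_quadProd_mul_prod_quadProd (k := s + 1 + 1) (by omega) (by omega)
  rw [add_sub_cancel_right] at h0 h1
  rw [prod_Icc_one_add_one (f := quadProd (n + 1) a b) (by omega),
    prod_Icc_one_add_one (f := quadProd n c d) (by omega)] at h1
  refine Int.eq_of_mul_eq_one ?_
  linear_combination quadProd (n + 1) a b (s + 1 + 1) * quadProd n c d (s + 1) * h0 - h1

lemma quadProd_eq_quadProd_add_one (h : isBS n a b c d) {t : ℤ} (ht1 : 1 ≤ t) (htn : t < n) :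
    quadProd n c d t = quadProd n c d (t + 1) :=
  calc quadProd n c d t = quadProd (n + 1) a b (t + 1) := (h.quadProd_add_one_eq ht1 htn).symm
    _ = quadProd (n + 1) a b (n - t + 1) := by rw [← quadProd_reflect]; congr 1; ring
    _ = quadProd n c d (n - t) := h.quadProd_add_one_eq (by omega) (by omega)
    _ = quadProd n c d (t + 1) := by rw [← quadProd_reflect]; congr 1; ring

lemma quadProd_eq_quadProd_one (h : isBS n a b c d) {j : ℤ} (hj1 : 1 ≤ j) (hjn : j ≤ n) :
    quadProd n c d j = quadProd n c d 1 := by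
  induction j, hj1 using Int.leInduction with
  | base => rfl
  | succ t ht1 ih => rw [← h.quadProd_eq_quadProd_add_one ht1 (by omega), ih (by omega)]

lemma quadProd_eq_one (h : isBS n a b c d) {j : ℤ} (hj1 : 1 ≤ j) (hjn : j ≤ n) :
    quadProd n c d j = 1 := by
  have ⟨ha, hb, hc, hd, _⟩ := h
  rw [h.quadProd_eq_quadProd_one hj1 hjn]
  obtain ⟨m, hm | hm⟩ := Int.even_or_odd' (n : ℤ)
  · rw [← h.quadProd_eq_quadProd_one (j := m) (by omega) (by omega),
      ← h.quadProd_add_one_eq (by omega) (by omega)]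
    exact quadProd_eq_one_of_two_mul_eq (by omega)
      (ha.isUnit (by omega) (by push_cast; omega)) (hb.isUnit (by omega) (by push_cast; omega))
  · rw [← h.quadProd_eq_quadProd_one (j := m + 1) (by omega) (by omega)]
    exact quadProd_eq_one_of_two_mul_eq (by omega)
      (hc.isUnit (by omega) (by omega)) (hd.isUnit (by omega) (by omega))

lemma ac_tswap (h : isBS n a b c d) (i : ℤ) :
    ac n (tswap n c d c) i + ac n (tswap n c d d) i = ac n c i + ac n d i := by
  have ⟨_, _, hc, hd, _⟩ := h
  have hsupp : ∀ j, j < 1 ∨ (n : ℤ) < j → (c - d) j = 0 := fun j hj => by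
    simp [hc.2 j hj, hd.2 j hj]
  have key := ac_add_add_ac_sub (L := n) (tswap n c d c) (tswap n c d d) i
  rw [tswap_add_tswap, tswap_sub_tswap hc hd fun j => h.quadProd_eq_one, ac_reflect hsupp,
    ac_add_add_ac_sub] at key
  linarith

end isBS

theorem stmt11 (n : ℕ) (a b c d : ℤ → ℤ) (h : isBS n a b c d) :
    isBS n a b (tswap n c d c) (tswap n c d d) :=
  ⟨h.1, h.2.1, binOn_tswap h.2.2.1, binOn_tswap h.2.2.2.1, fun i hi => by
    linarith [h.ac_tswap i, h.2.2.2.2 i hi]⟩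
end

section
/- The binary sequences U = (+,+,−,−,−,+,−,−,+) and V = (+,+,−,+,+,−,−,−,+) of length 9 have the same nonperiodic autocorrelation function (N_U = N_V), but V is not obtained from U by any combination of negation and reversal: V ≠ U, V ≠ −U, V ≠ U', V ≠ −U'. -/
/-!
Write X(z) = ∑ x_j z^j. Then N_X(i) is the coefficient of z^i in X(z⁻¹) X(z), a product that
is multiplicative in X and unchanged under X(z) ↦ -z^k X(z⁻¹). With A(z) = z + z² - z³ and
B(z) = 1 - z - z², the sequences factor as U(z) = A(z) B(z³) and V(z) = A(z) · (-z⁶ B(z⁻³)),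
so N_U = N_V, while a single entry tells V apart from each of ±U, ±U'.
-/

open Finset

/-- The sequence `U = (+,+,−,−,−,+,−,−,+)`. -/
def U : ℤ → ℤ := fun j =>
  if j = 1 then 1 else if j = 2 then 1 else if j = 3 then -1 else
  if j = 4 then -1 else if j = 5 then -1 else if j = 6 then 1 else
  if j = 7 then -1 else if j = 8 then -1 else if j = 9 then 1 else 0

/-- The sequence `V = (+,+,−,+,+,−,−,−,+)`. -/
def V : ℤ → ℤ := fun j =>
  if j = 1 then 1 else if j = 2 then 1 else if j = 3 then -1 else
  if j = 4 then 1 else if j = 5 then 1 else if j = 6 then -1 else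
  if j = 7 then -1 else if j = 8 then -1 else if j = 9 then 1 else 0

open LaurentPolynomial

noncomputable def autocorr {R : Type*} [CommSemiring R] (p : R[T;T⁻¹]) : R[T;T⁻¹] :=
  invert p * p

section autocorr

variable {R : Type*}

theorem autocorr_mul [CommSemiring R] (p q : R[T;T⁻¹]) :
    autocorr (p * q) = autocorr p * autocorr q := by
  simp only [autocorr, map_mul]
  ring

theorem autocorr_T_mul_invert [CommSemiring R] (k : ℤ) (p : R[T;T⁻¹]) :
    autocorr (T k * invert p) = autocorr p :=
  calc autocorr (T k * invert p) = T (-k) * T k * (invert p * p) := by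
        simp only [autocorr, map_mul, invert_T, involutive_invert p]
        ring
    _ = autocorr p := by rw [← T_add, neg_add_cancel, T_zero, one_mul, autocorr]

theorem autocorr_neg [CommRing R] (p : R[T;T⁻¹]) : autocorr (-p) = autocorr p := by
  simp only [autocorr, map_neg, neg_mul_neg]

end autocorr

noncomputable def seqLaurent (n : ℕ) (a : ℤ → ℤ) : ℤ[T;T⁻¹] :=
  ∑ j ∈ Icc (1 : ℤ) n, C (a j) * T j

section seqLaurent

variable {n : ℕ} {a : ℤ → ℤ}

theorem coeff_seqLaurent (ha : ∀ j ∉ Icc (1 : ℤ) n, a j = 0) (m : ℤ) :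
    (seqLaurent n a).coeff m = a m := by
  simp only [seqLaurent, AddMonoidAlgebra.coeff_sum, ← single_eq_C_mul_T,
    AddMonoidAlgebra.coeff_single, Finsupp.finsetSum_apply, Finsupp.single_apply, sum_ite_eq']
  split_ifs with hm
  · rfl
  · exact (ha m hm).symm

theorem ac_eq_coeff_autocorr (ha : ∀ j ∉ Icc (1 : ℤ) n, a j = 0) (i : ℤ) :
    ac n a i = (autocorr (seqLaurent n a)).coeff i := by
  have hinv : invert (seqLaurent n a) = ∑ j ∈ Icc (1 : ℤ) n, .single (-j) (a j) := by
    simp only [seqLaurent, map_sum, map_mul, invert_C, invert_T, single_eq_C_mul_T]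
  rw [autocorr, hinv, sum_mul, AddMonoidAlgebra.coeff_sum, ac]
  simp only [Finsupp.finsetSum_apply, AddMonoidAlgebra.coeff_single_mul_apply, neg_neg,
    coeff_seqLaurent ha, add_comm]

end seqLaurent

theorem Icc_one_nine : Icc (1 : ℤ) (9 : ℕ) = {1, 2, 3, 4, 5, 6, 7, 8, 9} := by decide

theorem U_eq_zero_of_notMem {j : ℤ} (hj : j ∉ Icc (1 : ℤ) (9 : ℕ)) : U j = 0 := by
  rw [mem_Icc] at hj
  unfold U
  split_ifs <;> omega

theorem V_eq_zero_of_notMem {j : ℤ} (hj : j ∉ Icc (1 : ℤ) (9 : ℕ)) : V j = 0 := by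
  rw [mem_Icc] at hj
  unfold V
  split_ifs <;> omega

theorem seqLaurent_U : seqLaurent 9 U = (T 1 + T 2 - T 3) * (1 - T 3 - T 6) := by
  rw [seqLaurent, Icc_one_nine]
  norm_num [U, sum_insert]
  simp only [mul_sub, add_mul, sub_mul, ← T_add, mul_one]
  norm_num
  abel

theorem seqLaurent_V : seqLaurent 9 V = (T 1 + T 2 - T 3) * (1 + T 3 - T 6) := by
  rw [seqLaurent, Icc_one_nine]
  norm_num [V, sum_insert]
  simp only [mul_add, mul_sub, add_mul, sub_mul, ← T_add, mul_one]
  norm_num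
  abel

theorem stmt13 :
    (∀ i : ℤ, ac 9 U i = ac 9 V i) ∧
    V ≠ U ∧ V ≠ (fun j => -U j) ∧
    V ≠ (fun j => U (10 - j)) ∧ V ≠ (fun j => -U (10 - j)) := by
  refine ⟨fun i => ?_, fun h => ?_, fun h => ?_, fun h => ?_, fun h => ?_⟩
  · have hrev : (1 + T 3 - T 6 : ℤ[T;T⁻¹]) = -(T 6 * invert (1 - T 3 - T 6)) := by
      simp only [map_sub, map_one, invert_T, mul_sub, mul_one, ← T_add]
      norm_num
      abel
    rw [ac_eq_coeff_autocorr (fun _ => U_eq_zero_of_notMem) i,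
      ac_eq_coeff_autocorr (fun _ => V_eq_zero_of_notMem) i, seqLaurent_U, seqLaurent_V, hrev,
      autocorr_mul, autocorr_mul, autocorr_neg, autocorr_T_mul_invert]
  · exact absurd (congrFun h 4) (by decide)
  · exact absurd (congrFun h 1) (by decide)
  · exact absurd (congrFun h 2) (by decide)
  · exact absurd (congrFun h 1) (by decide)
end

section
/- Let A, B, C be {±1}-sequences of lengths m, n, k with associated polynomials A(x), B(x), C(x). Then the polynomial P(x) = A(x)·B(x^m)·C(x^{mn}) has degree mnk − 1 and all its coefficients lie in {±1}; moreover replacing any of the three factors by its dual (f ↦ f*, where f*(x) = x^{deg f} f(x^{-1})) yields a polynomial with the same norm P(x)P(x^{-1}). -/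
/-!
Since `A` has degree `m - 1 < m`, each coefficient of `A(x) B(x^m)` receives exactly one
contribution: the coefficient of `x^j` is `a_{j mod m} b_{⌊j/m⌋}`, a product of units, and these
indices run over all pairs exactly when `j < mn`. Applying this twice (with `A(x) B(x^m)` of
length `mn` in the role of `A`) gives the first two claims. The norm `F ↦ F(x) F(x⁻¹)` is
multiplicative and is unchanged by `F ↦ x^a F(x⁻¹)`, so dualising any factor leaves the norm of
the product unchanged.
-/

open LaurentPolynomial

namespace Polynomial

variable {R : Type*} [CommSemiring R]

theorem coeff_mul_expand_of_natDegree_lt {m : ℕ} {P : R[X]} (hP : P.natDegree < m)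
    (Q : R[X]) (j : ℕ) :
    (P * expand R m Q).coeff j = P.coeff (j % m) * Q.coeff (j / m) := by
  have hm : 0 < m := by omega
  rw [coeff_mul, Finset.sum_eq_single (j % m, m * (j / m))]
  · rw [coeff_expand hm, if_pos ⟨j / m, rfl⟩, Nat.mul_div_cancel_left _ hm]
  · rintro ⟨a, b⟩ hab hne
    rw [Finset.HasAntidiagonal.mem_antidiagonal] at hab
    rw [coeff_expand hm]
    by_cases hb : m ∣ b
    · by_cases ha : a < m
      · obtain ⟨c, rfl⟩ := hb
        refine absurd ?_ hne
        have hj_mod : j % m = a := by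
          rw [← hab, Nat.add_mul_mod_self_left, Nat.mod_eq_of_lt ha]
        have hj_div : j / m = c := by
          rw [← hab, Nat.add_mul_div_left _ _ hm, Nat.div_eq_of_lt ha, Nat.zero_add]
        rw [hj_mod, hj_div]
      · rw [coeff_eq_zero_of_natDegree_lt (by omega), zero_mul]
    · simp [hb]
  · exact absurd (Finset.HasAntidiagonal.mem_antidiagonal.mpr (Nat.mod_add_div j m))

/-- For `R = ℤ` (see `Polynomial.hasUnitCoeffs_iff_int`), `p` is the polynomial of a
`{±1}`-sequence of length `ℓ`. -/
def HasUnitCoeffs (ℓ : ℕ) (p : R[X]) : Prop :=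
  p.natDegree = ℓ - 1 ∧ ∀ j < ℓ, IsUnit (p.coeff j)

theorem hasUnitCoeffs_iff_int (ℓ : ℕ) (p : ℤ[X]) :
    HasUnitCoeffs ℓ p ↔ p.natDegree = ℓ - 1 ∧ ∀ j < ℓ, p.coeff j = 1 ∨ p.coeff j = -1 := by
  simp only [HasUnitCoeffs, Int.isUnit_iff]

theorem HasUnitCoeffs.mul_expand [Nontrivial R] {m n : ℕ} {P Q : R[X]}
    (hP : HasUnitCoeffs m P) (hQ : HasUnitCoeffs n Q) (hm : 0 < m) (hn : 0 < n) :
    HasUnitCoeffs (m * n) (P * expand R m Q) := by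
  obtain ⟨hPdeg, hPcoeff⟩ := hP
  obtain ⟨hQdeg, hQcoeff⟩ := hQ
  have hPm : P.natDegree < m := by omega
  have hcoeff : ∀ j < m * n, IsUnit ((P * expand R m Q).coeff j) := fun j hj => by
    rw [coeff_mul_expand_of_natDegree_lt hPm]
    exact (hPcoeff _ (Nat.mod_lt j hm)).mul (hQcoeff _ (Nat.div_lt_of_lt_mul hj))
  have hmn : 0 < m * n := Nat.mul_pos hm hn
  refine ⟨natDegree_eq_of_le_of_coeff_ne_zero ?_ (hcoeff _ (by omega)).ne_zero, hcoeff⟩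
  refine natDegree_le_iff_coeff_eq_zero.mpr fun j (hj : m * n - 1 < j) => ?_
  have hQj : Q.natDegree < j / m := by
    have : n ≤ j / m := (Nat.le_div_iff_mul_le hm).mpr (by rw [mul_comm]; omega)
    omega
  rw [coeff_mul_expand_of_natDegree_lt hPm, coeff_eq_zero_of_natDegree_lt hQj, mul_zero]

end Polynomial

namespace LaurentPolynomial

variable {R : Type*} [CommSemiring R]

noncomputable def norm (F : R[T;T⁻¹]) : R[T;T⁻¹] := F * invert F

theorem norm_mul (F G : R[T;T⁻¹]) : norm (F * G) = norm F * norm G := by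
  simp only [norm, map_mul]
  ring

theorem norm_T_mul_invert (a : ℤ) (F : R[T;T⁻¹]) : norm (T a * invert F) = norm F := by
  rw [norm_mul, norm, norm, invert_T, involutive_invert F, ← T_add, add_neg_cancel, T_zero,
    one_mul, mul_comm, norm]

theorem norm_ite_T_mul_invert (b : Bool) (a : ℤ) (F : R[T;T⁻¹]) :
    norm (if b then T a * invert F else F) = norm F := by
  cases b
  · rfl
  · exact norm_T_mul_invert a F

end LaurentPolynomial

theorem stmt17 (m n k : ℕ) (hm : 0 < m) (hn : 0 < n) (hk : 0 < k)
    (pA pB pC : Polynomial ℤ)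
    (hAdeg : pA.natDegree = m - 1) (hA : ∀ j < m, pA.coeff j = 1 ∨ pA.coeff j = -1)
    (hBdeg : pB.natDegree = n - 1) (hB : ∀ j < n, pB.coeff j = 1 ∨ pB.coeff j = -1)
    (hCdeg : pC.natDegree = k - 1) (hC : ∀ j < k, pC.coeff j = 1 ∨ pC.coeff j = -1) :
    (pA * Polynomial.expand ℤ m pB * Polynomial.expand ℤ (m * n) pC).natDegree =
      m * n * k - 1 ∧
    (∀ j < m * n * k,
      (pA * Polynomial.expand ℤ m pB * Polynomial.expand ℤ (m * n) pC).coeff j = 1 ∨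
      (pA * Polynomial.expand ℤ m pB * Polynomial.expand ℤ (m * n) pC).coeff j = -1) ∧
    (∀ b₁ b₂ b₃ : Bool,
      let F₁ := Polynomial.toLaurent pA
      let F₂ := Polynomial.toLaurent (Polynomial.expand ℤ m pB)
      let F₃ := Polynomial.toLaurent (Polynomial.expand ℤ (m * n) pC)
      let G₁ := if b₁ then T ((m : ℤ) - 1) * invert F₁ else F₁
      let G₂ := if b₂ then T ((m : ℤ) * ((n : ℤ) - 1)) * invert F₂ else F₂
      let G₃ := if b₃ then T ((m : ℤ) * (n : ℤ) * ((k : ℤ) - 1)) * invert F₃ else F₃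
      (G₁ * G₂ * G₃) * invert (G₁ * G₂ * G₃) =
        (F₁ * F₂ * F₃) * invert (F₁ * F₂ * F₃)) := by
  have hA' := (Polynomial.hasUnitCoeffs_iff_int m pA).mpr ⟨hAdeg, hA⟩
  have hB' := (Polynomial.hasUnitCoeffs_iff_int n pB).mpr ⟨hBdeg, hB⟩
  have hC' := (Polynomial.hasUnitCoeffs_iff_int k pC).mpr ⟨hCdeg, hC⟩
  obtain ⟨hdeg, hcoeff⟩ := (Polynomial.hasUnitCoeffs_iff_int _ _).mp
    ((hA'.mul_expand hB' hm hn).mul_expand hC' (Nat.mul_pos hm hn) hk)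
  refine ⟨hdeg, hcoeff, fun b₁ b₂ b₃ => ?_⟩
  change LaurentPolynomial.norm _ = LaurentPolynomial.norm _
  simp only [LaurentPolynomial.norm_mul, LaurentPolynomial.norm_ite_T_mul_invert]
end
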